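/- The following two statements are equivalent: (1) every subset of ℝ has the perfect set property, i.e., every uncountable subset of ℝ contains a nonempty perfect set; (2) for every a₀, b₀ ∈ ℝ with a₀ < b₀ and for every uncountable set S ⊆ [a₀, b₀], player A has a winning strategy in the Cantor game on [a₀, b₀] with target set S. -/

import Mathlib

open Filter Set

/-- Data generating a generalized Cantor set: closed intervals
`I_{i₁,…,iₙ} = [c l, d l]` indexed by nonempty finite binary sequences
(`l : List Bool`, with the last entry the most recently added index),
inside a closed interval `[lo, hi]`, with diameters controlled by a strictly
decreasing positive sequence `e` tending to `0`. -/
structure GenCantor where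
  lo : ℝ
  hi : ℝ
  lo_lt_hi : lo < hi
  e : ℕ → ℝ
  e_pos : ∀ n : ℕ, 0 < e n
  e_anti : StrictAnti e
  e_lim : Filter.Tendsto e Filter.atTop (nhds 0)
  c : List Bool → ℝ
  d : List Bool → ℝ
  diam_pos : ∀ l : List Bool, l ≠ [] → 0 < d l - c l
  diam_lt : ∀ l : List Bool, l ≠ [] → d l - c l < e l.length
  root_sub : ∀ i : Bool, Set.Icc (c [i]) (d [i]) ⊆ Set.Icc lo hi
  nested : ∀ l : List Bool, l ≠ [] → ∀ i : Bool,
    Set.Icc (c (l ++ [i])) (d (l ++ [i])) ⊆ Set.Icc (c l) (d l)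
  disj : ∀ l : List Bool,
    Set.Icc (c (l ++ [false])) (d (l ++ [false])) ∩
      Set.Icc (c (l ++ [true])) (d (l ++ [true])) = ∅

/-- The generalized Cantor set generated by the data `G`:
`C = ⋂_{n ≥ 1} ⋃_{i₁,…,iₙ} I_{i₁,…,iₙ}`. -/
def GenCantor.C (G : GenCantor) : Set ℝ :=
  ⋂ n : ℕ, ⋃ l ∈ {l : List Bool | l.length = n + 1}, Set.Icc (G.c l) (G.d l)

/-- A set of reals is a generalized Cantor set if it is generated by some data. -/
def IsGenCantorSet (C : Set ℝ) : Prop := ∃ G : GenCantor, G.C = C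

/-- The length-`(n+1)` initial segment `[s 0, …, s n]` of a binary sequence. -/
def prefixSeq (s : ℕ → Bool) (n : ℕ) : List Bool := List.ofFn fun i : Fin (n + 1) => s i

/-- A set `P ⊆ ℝ` is perfect if it is closed and each of its points is a
limit point of `P`. -/
def PerfectSet (P : Set ℝ) : Prop := IsClosed P ∧ ∀ x ∈ P, x ∈ closure (P \ {x})

/-- A valid history for player A before A's move number `n+1`:
moves `a 0 = a₀ < a 1 < ⋯ < a n < b n < ⋯ < b 1 < b 0 = b₀`. -/
def ValidHistA (a₀ b₀ : ℝ) {n : ℕ} (a b : Fin (n + 1) → ℝ) : Prop :=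
  a 0 = a₀ ∧ b 0 = b₀ ∧ StrictMono a ∧ StrictAnti b ∧ a (Fin.last n) < b (Fin.last n)

/-- A strategy for player A in the Cantor game on `[a₀, b₀]`:
functions `f n` producing the move `a (n+1)` from the history
`(a 0, b 0, …, a n, b n)`, with `a n < f n a b < b n` on valid histories. -/
structure StratA (a₀ b₀ : ℝ) where
  f : (n : ℕ) → (Fin (n + 1) → ℝ) → (Fin (n + 1) → ℝ) → ℝ
  valid : ∀ (n : ℕ) (a b : Fin (n + 1) → ℝ), ValidHistA a₀ b₀ a b →
    a (Fin.last n) < f n a b ∧ f n a b < b (Fin.last n)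

/-- A valid history for player B before B's move number `n+1`:
`a 0 = a₀ < a 1 < ⋯ < a (n+1) < b n < ⋯ < b 1 < b 0 = b₀`. -/
def ValidHistB (a₀ b₀ : ℝ) {n : ℕ} (a : Fin (n + 2) → ℝ) (b : Fin (n + 1) → ℝ) : Prop :=
  a 0 = a₀ ∧ b 0 = b₀ ∧ StrictMono a ∧ StrictAnti b ∧ a (Fin.last (n + 1)) < b (Fin.last n)

/-- A strategy for player B in the Cantor game on `[a₀, b₀]`:
functions `g n` producing the move `b (n+1)` from the history
`(a 0, b 0, …, a n, b n, a (n+1))`, with `a (n+1) < g n a b < b n` on valid histories. -/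
structure StratB (a₀ b₀ : ℝ) where
  g : (n : ℕ) → (Fin (n + 2) → ℝ) → (Fin (n + 1) → ℝ) → ℝ
  valid : ∀ (n : ℕ) (a : Fin (n + 2) → ℝ) (b : Fin (n + 1) → ℝ), ValidHistB a₀ b₀ a b →
    a (Fin.last (n + 1)) < g n a b ∧ g n a b < b (Fin.last n)

/-- A play of the Cantor game on `[a₀, b₀]`:
`a (n-1) < a n < b n < b (n-1)` for all `n ≥ 1`. -/
def IsPlay (a₀ b₀ : ℝ) (a b : ℕ → ℝ) : Prop :=
  a 0 = a₀ ∧ b 0 = b₀ ∧ ∀ n : ℕ, a n < a (n + 1) ∧ a (n + 1) < b (n + 1) ∧ b (n + 1) < b n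

/-- A play is consistent with a strategy for A if each of A's moves is given by
the strategy applied to the preceding history. -/
def ConsistentA {a₀ b₀ : ℝ} (σ : StratA a₀ b₀) (a b : ℕ → ℝ) : Prop :=
  ∀ n : ℕ, a (n + 1) = σ.f n (fun i : Fin (n + 1) => a i) (fun i : Fin (n + 1) => b i)

/-- A play is consistent with a strategy for B if each of B's moves is given by
the strategy applied to the preceding history. -/
def ConsistentB {a₀ b₀ : ℝ} (σ : StratB a₀ b₀) (a b : ℕ → ℝ) : Prop :=
  ∀ n : ℕ, b (n + 1) = σ.g n (fun i : Fin (n + 2) => a i) (fun i : Fin (n + 1) => b i)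

/-- The limit set of a strategy for player A: all limits `lim aₙ` over plays
consistent with the strategy. -/
def limitSetA {a₀ b₀ : ℝ} (σ : StratA a₀ b₀) : Set ℝ :=
  {x | ∃ a b : ℕ → ℝ, IsPlay a₀ b₀ a b ∧ ConsistentA σ a b ∧
    Filter.Tendsto a Filter.atTop (nhds x)}

/-- The limit set of a strategy for player B: all limits `lim aₙ` over plays
consistent with the strategy. -/
def limitSetB {a₀ b₀ : ℝ} (σ : StratB a₀ b₀) : Set ℝ :=
  {x | ∃ a b : ℕ → ℝ, IsPlay a₀ b₀ a b ∧ ConsistentB σ a b ∧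
    Filter.Tendsto a Filter.atTop (nhds x)}

/-- A strategy for A is winning for target set `S` iff its limit set lies in `S`. -/
def WinningA {a₀ b₀ : ℝ} (σ : StratA a₀ b₀) (S : Set ℝ) : Prop := limitSetA σ ⊆ S

/-- A strategy for B is winning for target set `S` iff its limit set lies in
`[a₀, b₀] − S`. -/
def WinningB {a₀ b₀ : ℝ} (σ : StratB a₀ b₀) (S : Set ℝ) : Prop :=
  limitSetB σ ⊆ Set.Icc a₀ b₀ \ S

/-- `B` is a Bernstein set in `X ⊆ ℝ` (with its subspace topology) if `B ⊆ X` and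
neither `B` nor `X − B` contains a set that is uncountable and closed in `X`. -/
def IsBernsteinIn (X B : Set ℝ) : Prop :=
  B ⊆ X ∧
    (¬ ∃ T : Set ℝ, T ⊆ B ∧ ¬ T.Countable ∧ IsClosed (Subtype.val ⁻¹' T : Set X)) ∧
    (¬ ∃ T : Set ℝ, T ⊆ X \ B ∧ ¬ T.Countable ∧ IsClosed (Subtype.val ⁻¹' T : Set X))

/-- The set of right condensation points of `S` in `[a₀, b₀]`. -/
def rightCondPts (a₀ b₀ : ℝ) (S : Set ℝ) : Set ℝ :=
  {x ∈ Set.Icc a₀ b₀ | ∀ ε > 0, ¬ (Set.Ioo x (x + ε) ∩ S).Countable}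

/-!
If `S ⊆ [a₀, b₀]` contains a perfect set `P`, then `P` is uncountable, and A wins by always
moving to a point of `P` at which `P` is uncountable on the right: whatever B answers, the new
interval `(aₙ, bₙ)` again meets `P` uncountably, and `lim aₙ ∈ closure P = P ⊆ S`.

Conversely, fix a strategy `σ` for A. After each move `a` of A, B can answer either high, or low:
below the reply of `σ` to the high answer. Letting a binary sequence `s` choose B's answers, with
the intervals shrinking geometrically, gives a continuous injection of the Cantor space into the
limit set of `σ`; its image is compact and uncountable, so it contains a nonempty perfect set. A
winning strategy for an uncountable `S ∩ [k, k + 1]` therefore yields a perfect subset of `S`.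
-/

open Set Filter Topology Function

instance : Uncountable (ℕ → Bool) := by
  rw [← Cardinal.aleph0_lt_mk_iff]
  simpa using Cardinal.cantor Cardinal.aleph0

lemma Set.not_countable_of_injective_of_range_subset {α β : Type*} [Uncountable α] {f : α → β}
    {s : Set β} (hf : Injective f) (hs : range f ⊆ s) : ¬ s.Countable := fun hc =>
  not_countable (α := α) <| countable_univ_iff.1 <|
    countable_of_injective_of_countable_image hf.injOn (by rw [image_univ]; exact hc.mono hs)

lemma Perfect.not_countable {α : Type*} [MetricSpace α] [CompleteSpace α] {P : Set α}
    (hP : Perfect P) (hne : P.Nonempty) : ¬ P.Countable :=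
  let ⟨_, hfP, _, hf⟩ := hP.exists_nat_bool_injection hne
  not_countable_of_injective_of_range_subset hf hfP

lemma perfectSet_iff_perfect {P : Set ℝ} : PerfectSet P ↔ Perfect P := by
  have hacc : ∀ x, x ∈ closure (P \ {x}) ↔ AccPt x (𝓟 P) := fun _ =>
    mem_closure_iff_nhdsWithin_neBot.trans accPt_principal_iff_nhdsWithin.symm
  exact ⟨fun ⟨hc, hx⟩ => ⟨hc, fun x hxP => (hacc x).1 (hx x hxP)⟩,
    fun ⟨hc, hx⟩ => ⟨hc, fun x hxP => (hacc x).2 (hx x hxP)⟩⟩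

lemma exists_Icc_not_countable_inter {S : Set ℝ} (hS : ¬ S.Countable) :
    ∃ a b : ℝ, a < b ∧ ¬ (S ∩ Icc a b).Countable := by
  have hcover : S ⊆ ⋃ k : ℤ, S ∩ Icc (k : ℝ) (k + 1) := fun x hx =>
    mem_iUnion.2 ⟨⌊x⌋, hx, Int.floor_le x, (Int.lt_floor_add_one x).le⟩
  obtain ⟨k, hk⟩ : ∃ k : ℤ, ¬ (S ∩ Icc (k : ℝ) (k + 1)).Countable := by
    by_contra! h
    exact hS ((countable_iUnion h).mono hcover)
  exact ⟨k, k + 1, lt_add_one _, hk⟩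

def IsRightCondensationPt (T : Set ℝ) (x : ℝ) : Prop :=
  ∀ y > x, ¬ (Ioo x y ∩ T).Countable

lemma countable_setOf_not_isRightCondensationPt (T : Set ℝ) :
    {x ∈ T | ¬ IsRightCondensationPt T x}.Countable := by
  let A : ℚ → Set ℝ := fun q => {x ∈ T | x < q ∧ (Ioo x q ∩ T).Countable}
  have hA : ∀ q, (A q).Countable := by
    intro q
    -- off its minimum, `A q` is covered by countably many of the countable sets `Ioo y q ∩ T`
    have hcover : A q ⊆
        {x | IsLeast (A q) x} ∪ ⋃ r ∈ {r : ℚ | ∃ y ∈ A q, y < r}, Ioo (r : ℝ) q ∩ T := by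
      intro x hx
      by_cases hleast : IsLeast (A q) x
      · exact Or.inl hleast
      obtain ⟨y, hy, hyx⟩ : ∃ y ∈ A q, y < x := by
        simpa [IsLeast, hx, lowerBounds] using hleast
      obtain ⟨r, hyr, hrx⟩ := exists_rat_btwn hyx
      exact Or.inr (mem_biUnion ⟨y, hy, hyr⟩ ⟨⟨hrx, hx.2.1⟩, hx.1⟩)
    refine Countable.mono hcover (Countable.union ?_ ?_)
    · exact Subsingleton.countable fun x hx y hy => hx.unique hy
    · refine (to_countable _).biUnion fun r ⟨y, hy, hyr⟩ => hy.2.2.mono ?_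
      exact inter_subset_inter_left _ (Ioo_subset_Ioo_left hyr.le)
  refine (countable_iUnion hA).mono ?_
  rintro x ⟨hxT, hx⟩
  obtain ⟨y, hxy, hc⟩ : ∃ y > x, (Ioo x y ∩ T).Countable := by
    simpa [IsRightCondensationPt] using hx
  obtain ⟨q, hxq, hqy⟩ := exists_rat_btwn hxy
  exact mem_iUnion.2
    ⟨q, hxT, hxq, hc.mono (inter_subset_inter_left _ (Ioo_subset_Ioo_right hqy.le))⟩

lemma IsRightCondensationPt.mono {T T' : Set ℝ} {x : ℝ} (h : IsRightCondensationPt T x)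
    (hT : T ⊆ T') : IsRightCondensationPt T' x := fun y hy hc =>
  h y hy (hc.mono (inter_subset_inter_right _ hT))

lemma exists_isRightCondensationPt {T : Set ℝ} (hT : ¬ T.Countable) :
    ∃ x ∈ T, IsRightCondensationPt T x := by
  by_contra! h
  refine hT ((countable_setOf_not_isRightCondensationPt T).mono fun x hx => ?_)
  exact ⟨hx, h x hx⟩

lemma exists_isRightCondensationPt_Ioo {T : Set ℝ} {u v : ℝ} (h : ¬ (Ioo u v ∩ T).Countable) :
    ∃ x ∈ Ioo u v ∩ T, IsRightCondensationPt T x :=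
  let ⟨x, hx, hxT⟩ := exists_isRightCondensationPt h
  ⟨x, hx, hxT.mono inter_subset_right⟩

open Classical in
noncomputable def condensationMove (T : Set ℝ) (u v : ℝ) : ℝ :=
  if h : ∃ x ∈ Ioo u v ∩ T, IsRightCondensationPt T x then h.choose else (u + v) / 2

lemma condensationMove_mem_Ioo (T : Set ℝ) {u v : ℝ} (huv : u < v) :
    condensationMove T u v ∈ Ioo u v := by
  unfold condensationMove
  split_ifs with h
  · exact h.choose_spec.1.1
  · constructor <;> linarith

lemma condensationMove_spec {T : Set ℝ} {u v : ℝ} (h : ¬ (Ioo u v ∩ T).Countable) :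
    condensationMove T u v ∈ T ∧ IsRightCondensationPt T (condensationMove T u v) := by
  have hex := exists_isRightCondensationPt_Ioo h
  rw [condensationMove, dif_pos hex]
  exact ⟨hex.choose_spec.1.2, hex.choose_spec.2⟩

noncomputable def condensationStrat (a₀ b₀ : ℝ) (T : Set ℝ) : StratA a₀ b₀ where
  f n a b := condensationMove T (a (Fin.last n)) (b (Fin.last n))
  valid _ _ _ h := condensationMove_mem_Ioo T h.2.2.2.2

theorem limitSetA_condensationStrat_subset {a₀ b₀ : ℝ} {T : Set ℝ}
    (hT : ¬ (Ioo a₀ b₀ ∩ T).Countable) : limitSetA (condensationStrat a₀ b₀ T) ⊆ closure T := by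
  rintro x ⟨a, b, ⟨ha0, hb0, hstep⟩, hcons, hlim⟩
  have hmove : ∀ n, a (n + 1) = condensationMove T (a n) (b n) := hcons
  have hinv : ∀ n, ¬ (Ioo (a n) (b n) ∩ T).Countable := by
    intro n
    induction n with
    | zero => rwa [ha0, hb0]
    | succ n ih =>
      have hlt := (hstep n).2.1
      rw [hmove n] at hlt ⊢
      exact (condensationMove_spec ih).2 _ hlt
  refine mem_closure_of_tendsto ((tendsto_add_atTop_iff_nat 1).2 hlim) (Eventually.of_forall ?_)
  intro n
  rw [hmove n]
  exact (condensationMove_spec (hinv n)).1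

lemma Fin.strictMono_snoc {α : Type*} [Preorder α] {n : ℕ} {f : Fin (n + 1) → α}
    (hf : StrictMono f) {x : α} (hx : f (Fin.last n) < x) :
    StrictMono (Fin.snoc f x : Fin (n + 2) → α) := by
  refine Fin.strictMono_iff_lt_succ.2 fun i => ?_
  induction i using Fin.lastCases with
  | last => simpa using hx
  | cast j =>
    simp only [Fin.succ_castSucc, Fin.snoc_castSucc]
    exact hf Fin.castSucc_lt_succ

lemma Fin.strictAnti_snoc {α : Type*} [Preorder α] {n : ℕ} {f : Fin (n + 1) → α}
    (hf : StrictAnti f) {x : α} (hx : x < f (Fin.last n)) :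
    StrictAnti (Fin.snoc f x : Fin (n + 2) → α) :=
  Fin.strictMono_snoc (α := αᵒᵈ) hf hx

section Histories

variable {a₀ b₀ : ℝ} {n : ℕ}

lemma ValidHistA.snoc {a b : Fin (n + 1) → ℝ} (h : ValidHistA a₀ b₀ a b) {x : ℝ}
    (hx : x ∈ Ioo (a (Fin.last n)) (b (Fin.last n))) : ValidHistB a₀ b₀ (Fin.snoc a x) b := by
  obtain ⟨ha0, hb0, ha, hb, -⟩ := h
  refine ⟨?_, hb0, Fin.strictMono_snoc ha hx.1, hb, ?_⟩
  · simpa using ha0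
  · simpa using hx.2

lemma ValidHistB.snoc {a : Fin (n + 2) → ℝ} {b : Fin (n + 1) → ℝ} (h : ValidHistB a₀ b₀ a b)
    {y : ℝ} (hy : y ∈ Ioo (a (Fin.last (n + 1))) (b (Fin.last n))) :
    ValidHistA a₀ b₀ a (Fin.snoc b y) := by
  obtain ⟨ha0, hb0, ha, hb, -⟩ := h
  refine ⟨ha0, ?_, ha, Fin.strictAnti_snoc hb hy.2, ?_⟩
  · simpa using hb0
  · simpa using hy.1

end Histories

namespace StratA

variable {a₀ b₀ : ℝ} (σ : StratA a₀ b₀) (τ : StratB a₀ b₀)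

def hist : (n : ℕ) → (Fin (n + 1) → ℝ) × (Fin (n + 1) → ℝ)
  | 0 => (fun _ => a₀, fun _ => b₀)
  | n + 1 =>
    let a := Fin.snoc (hist n).1 (σ.f n (hist n).1 (hist n).2)
    (a, Fin.snoc (hist n).2 (τ.g n a (hist n).2))

def playA (n : ℕ) : ℝ := (σ.hist τ n).1 (Fin.last n)

def playB (n : ℕ) : ℝ := (σ.hist τ n).2 (Fin.last n)

lemma hist_succ_fst (n : ℕ) :
    (σ.hist τ (n + 1)).1 = Fin.snoc (σ.hist τ n).1 (σ.f n (σ.hist τ n).1 (σ.hist τ n).2) := rfl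

lemma hist_succ_snd (n : ℕ) :
    (σ.hist τ (n + 1)).2 = Fin.snoc (σ.hist τ n).2 (τ.g n (σ.hist τ (n + 1)).1 (σ.hist τ n).2) :=
  rfl

lemma playA_succ (n : ℕ) : σ.playA τ (n + 1) = σ.f n (σ.hist τ n).1 (σ.hist τ n).2 := by
  simp [playA, hist_succ_fst]

lemma playB_succ (n : ℕ) : σ.playB τ (n + 1) = τ.g n (σ.hist τ (n + 1)).1 (σ.hist τ n).2 := by
  simp [playB, hist_succ_snd]

lemma hist_eq (n : ℕ) :
    σ.hist τ n = (fun i : Fin (n + 1) => σ.playA τ i, fun i : Fin (n + 1) => σ.playB τ i) := by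
  induction n with
  | zero => ext i <;> rw [Fin.fin_one_eq_zero i] <;> rfl
  | succ n ih =>
    ext i <;> induction i using Fin.lastCases with
    | last => rfl
    | cast j => simp only [hist_succ_fst, hist_succ_snd, Fin.snoc_castSucc, ih]; rfl

lemma hist_congr {τ τ' : StratB a₀ b₀} {n : ℕ} (h : ∀ k < n, τ.g k = τ'.g k) :
    σ.hist τ n = σ.hist τ' n := by
  induction n with
  | zero => rfl
  | succ n ih =>
    rw [hist, hist, ih fun k hk => h k (by omega), h n (by omega)]

variable {σ τ}

lemma validHistA_hist (hab : a₀ < b₀) (n : ℕ) :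
    ValidHistA a₀ b₀ (σ.hist τ n).1 (σ.hist τ n).2 := by
  induction n with
  | zero =>
    exact ⟨rfl, rfl, Fin.strictMono_iff_lt_succ.2 (·.elim0),
      Fin.strictAnti_iff_succ_lt.2 (·.elim0), hab⟩
  | succ n ih =>
    have hB := ih.snoc (σ.valid n _ _ ih)
    exact hB.snoc (τ.valid n _ _ hB)

lemma validHistB_hist (hab : a₀ < b₀) (n : ℕ) :
    ValidHistB a₀ b₀ (σ.hist τ (n + 1)).1 (σ.hist τ n).2 :=
  (validHistA_hist hab n).snoc (σ.valid n _ _ (validHistA_hist hab n))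

lemma isPlay_play (hab : a₀ < b₀) : IsPlay a₀ b₀ (σ.playA τ) (σ.playB τ) := by
  refine ⟨rfl, rfl, fun n => ?_⟩
  have hA := σ.valid n _ _ (validHistA_hist (σ := σ) (τ := τ) hab n)
  have hB := τ.valid n _ _ (validHistB_hist (σ := σ) (τ := τ) hab n)
  simp only [Fin.snoc_last, hist_succ_fst] at hB
  rw [playA_succ, playB_succ]
  exact ⟨hA.1, hB.1, hB.2⟩

lemma consistentA_play : ConsistentA σ (σ.playA τ) (σ.playB τ) := fun n => by
  rw [playA_succ, hist_eq]

lemma consistentB_play : ConsistentB τ (σ.playA τ) (σ.playB τ) := fun n => by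
  rw [playB_succ, hist_eq, hist_eq]

end StratA

namespace IsPlay

variable {a₀ b₀ : ℝ} {a b : ℕ → ℝ}

lemma strictMono (h : IsPlay a₀ b₀ a b) : StrictMono a :=
  strictMono_nat_of_lt_succ fun n => (h.2.2 n).1

lemma strictAnti (h : IsPlay a₀ b₀ a b) : StrictAnti b :=
  strictAnti_nat_of_succ_lt fun n => (h.2.2 n).2.2

lemma lt (h : IsPlay a₀ b₀ a b) (m n : ℕ) : a m < b n := by
  have hlt : ∀ k, a k < b k := fun
    | 0 => (h.2.2 0).1.trans ((h.2.2 0).2.1.trans (h.2.2 0).2.2)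
    | k + 1 => (h.2.2 k).2.1
  calc a m ≤ a (max m n) := h.strictMono.monotone (le_max_left m n)
    _ < b (max m n) := hlt _
    _ ≤ b n := h.strictAnti.antitone (le_max_right m n)

lemma bddAbove (h : IsPlay a₀ b₀ a b) : BddAbove (range a) :=
  ⟨b 0, by rintro _ ⟨m, rfl⟩; exact (h.lt m 0).le⟩

lemma tendsto_iSup (h : IsPlay a₀ b₀ a b) : Tendsto a atTop (𝓝 (⨆ n, a n)) :=
  tendsto_atTop_ciSup h.strictMono.monotone h.bddAbove

lemma iSup_mem_Icc (h : IsPlay a₀ b₀ a b) (n : ℕ) : ⨆ k, a k ∈ Icc (a n) (b n) :=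
  ⟨le_ciSup h.bddAbove n, ciSup_le fun m => (h.lt m n).le⟩

end IsPlay

noncomputable def stepToward (x y δ : ℝ) : ℝ := x + min (y - x) δ / 2

lemma stepToward_mem_Ioo {x y δ : ℝ} (hxy : x < y) (hδ : 0 < δ) : stepToward x y δ ∈ Ioo x y := by
  have h₁ : 0 < min (y - x) δ := lt_min (sub_pos.2 hxy) hδ
  have h₂ : min (y - x) δ ≤ y - x := min_le_left _ _
  constructor <;> unfold stepToward <;> linarith

lemma stepToward_sub_le (x y δ : ℝ) : stepToward x y δ - x ≤ δ / 2 := by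
  have := min_le_right (y - x) δ
  unfold stepToward
  linarith

namespace StratA

variable {a₀ b₀ : ℝ} {n : ℕ}

noncomputable def highMove (n : ℕ) (a : Fin (n + 2) → ℝ) (b : Fin (n + 1) → ℝ) : ℝ :=
  stepToward (a (Fin.last (n + 1))) (b (Fin.last n)) (2⁻¹ ^ n)

variable (σ : StratA a₀ b₀)

noncomputable def highReply (n : ℕ) (a : Fin (n + 2) → ℝ) (b : Fin (n + 1) → ℝ) : ℝ :=
  σ.f (n + 1) a (Fin.snoc b (highMove n a b))

noncomputable def lowMove (n : ℕ) (a : Fin (n + 2) → ℝ) (b : Fin (n + 1) → ℝ) : ℝ :=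
  stepToward (a (Fin.last (n + 1))) (σ.highReply n a b) (2⁻¹ ^ n)

variable {σ} {a : Fin (n + 2) → ℝ} {b : Fin (n + 1) → ℝ}

lemma highMove_mem (h : ValidHistB a₀ b₀ a b) :
    highMove n a b ∈ Ioo (a (Fin.last (n + 1))) (b (Fin.last n)) :=
  stepToward_mem_Ioo h.2.2.2.2 (by positivity)

lemma highReply_mem (h : ValidHistB a₀ b₀ a b) :
    σ.highReply n a b ∈ Ioo (a (Fin.last (n + 1))) (highMove n a b) := by
  simpa [highReply] using σ.valid (n + 1) _ _ (h.snoc (highMove_mem h))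

lemma lowMove_mem (h : ValidHistB a₀ b₀ a b) :
    σ.lowMove n a b ∈ Ioo (a (Fin.last (n + 1))) (σ.highReply n a b) :=
  stepToward_mem_Ioo (highReply_mem h).1 (by positivity)

variable (σ)

noncomputable def splitB (s : ℕ → Bool) : StratB a₀ b₀ where
  g n a b := if s n then highMove n a b else σ.lowMove n a b
  valid n a b h := by
    split_ifs
    · exact highMove_mem h
    · exact ⟨(lowMove_mem h).1,
        (lowMove_mem h).2.trans ((highReply_mem h).2.trans (highMove_mem h).2)⟩

noncomputable def cantorPt (s : ℕ → Bool) : ℝ := ⨆ n, σ.playA (σ.splitB s) n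

variable {σ}

lemma isPlay_splitB (hab : a₀ < b₀) (s : ℕ → Bool) :
    IsPlay a₀ b₀ (σ.playA (σ.splitB s)) (σ.playB (σ.splitB s)) :=
  isPlay_play hab

lemma cantorPt_mem_limitSetA (hab : a₀ < b₀) (s : ℕ → Bool) : σ.cantorPt s ∈ limitSetA σ :=
  ⟨_, _, isPlay_splitB hab s, consistentA_play, (isPlay_splitB hab s).tendsto_iSup⟩

lemma cantorPt_mem_Icc (hab : a₀ < b₀) (s : ℕ → Bool) (n : ℕ) :
    σ.cantorPt s ∈ Icc (σ.playA (σ.splitB s) n) (σ.playB (σ.splitB s) n) :=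
  (isPlay_splitB hab s).iSup_mem_Icc n

lemma hist_splitB_congr {s t : ℕ → Bool} {n : ℕ} (h : ∀ k < n, s k = t k) :
    σ.hist (σ.splitB s) n = σ.hist (σ.splitB t) n :=
  σ.hist_congr fun k hk => by simp only [splitB, h k hk]

lemma playB_sub_playA_le (s : ℕ → Bool) (n : ℕ) :
    σ.playB (σ.splitB s) (n + 1) - σ.playA (σ.splitB s) (n + 1) ≤ 2⁻¹ ^ n / 2 := by
  rw [playB_succ]
  simp only [splitB, highMove, lowMove]
  split_ifs <;> exact stepToward_sub_le _ _ _

lemma dist_cantorPt_le (hab : a₀ < b₀) {s t : ℕ → Bool} {n : ℕ} (h : ∀ k < n + 1, s k = t k) :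
    dist (σ.cantorPt s) (σ.cantorPt t) ≤ 2⁻¹ ^ n := by
  have hAB : σ.hist (σ.splitB s) (n + 1) = σ.hist (σ.splitB t) (n + 1) := hist_splitB_congr h
  have hs := cantorPt_mem_Icc (σ := σ) hab s (n + 1)
  have ht := cantorPt_mem_Icc (σ := σ) hab t (n + 1)
  rw [playA, playB, hAB] at hs
  calc dist (σ.cantorPt s) (σ.cantorPt t)
      ≤ σ.playB (σ.splitB t) (n + 1) - σ.playA (σ.splitB t) (n + 1) := Real.dist_le_of_mem_Icc hs ht
    _ ≤ 2⁻¹ ^ n / 2 := playB_sub_playA_le t n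
    _ ≤ 2⁻¹ ^ n := half_le_self (by positivity)

lemma continuous_cantorPt (hab : a₀ < b₀) : Continuous σ.cantorPt := by
  refine continuous_iff_continuousAt.2 fun s => Metric.tendsto_nhds.2 fun ε hε => ?_
  obtain ⟨n, hn⟩ := exists_pow_lt_of_lt_one hε (by norm_num : (2⁻¹ : ℝ) < 1)
  filter_upwards [(PiNat.isOpen_cylinder _ s (n + 1)).mem_nhds (PiNat.self_mem_cylinder s _)]
    with t ht
  exact (dist_cantorPt_le hab ht).trans_lt hn

lemma cantorPt_lt (hab : a₀ < b₀) {s t : ℕ → Bool} {n : ℕ} (h : ∀ k < n, s k = t k)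
    (hs : s n = true) (ht : t n = false) : σ.cantorPt t < σ.cantorPt s := by
  have hH : σ.hist (σ.splitB s) n = σ.hist (σ.splitB t) n := hist_splitB_congr h
  have hA : (σ.hist (σ.splitB s) (n + 1)).1 = (σ.hist (σ.splitB t) (n + 1)).1 := by
    rw [hist_succ_fst, hist_succ_fst, hH]
  -- `t` goes low, below A's answer to the high move that `s` makes
  have hlow : σ.playB (σ.splitB t) (n + 1) = σ.lowMove n (σ.hist (σ.splitB t) (n + 1)).1
      (σ.hist (σ.splitB t) n).2 := by
    simp [playB_succ, splitB, ht]
  have hhigh : σ.playA (σ.splitB s) (n + 2) = σ.highReply n (σ.hist (σ.splitB t) (n + 1)).1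
      (σ.hist (σ.splitB t) n).2 := by
    rw [playA_succ, hist_succ_snd, ← hA, ← hH]
    simp [splitB, hs, highReply]
  calc σ.cantorPt t ≤ σ.playB (σ.splitB t) (n + 1) := (cantorPt_mem_Icc hab t _).2
    _ < σ.playA (σ.splitB s) (n + 2) := by
      rw [hlow, hhigh]
      exact (lowMove_mem (validHistB_hist hab n)).2
    _ ≤ σ.cantorPt s := (cantorPt_mem_Icc hab s _).1

lemma injective_cantorPt (hab : a₀ < b₀) : Injective σ.cantorPt := by
  intro s t hst
  by_contra hne
  have hagree : ∀ k < PiNat.firstDiff s t, s k = t k := fun _ => PiNat.apply_eq_of_lt_firstDiff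
  have hdiff := PiNat.apply_firstDiff_ne hne
  cases hs : s (PiNat.firstDiff s t) <;> rw [hs] at hdiff
  · exact (cantorPt_lt hab (fun k hk => (hagree k hk).symm) (by simpa using hdiff.symm) hs).ne hst
  · exact (cantorPt_lt hab hagree hs (by simpa using hdiff.symm)).ne' hst

theorem exists_perfect_subset_limitSetA (hab : a₀ < b₀) :
    ∃ P : Set ℝ, Perfect P ∧ P.Nonempty ∧ P ⊆ limitSetA σ := by
  obtain ⟨P, hP, hne, hPC⟩ := exists_perfect_nonempty_of_isClosed_of_not_countable
    (isCompact_range (continuous_cantorPt (σ := σ) hab)).isClosed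
    (not_countable_of_injective_of_range_subset (injective_cantorPt hab) subset_rfl)
  exact ⟨P, hP, hne, hPC.trans (range_subset_iff.2 (cantorPt_mem_limitSetA hab))⟩

end StratA

theorem exists_winningA_of_perfect_subset {a₀ b₀ : ℝ} {S P : Set ℝ} (hS : S ⊆ Icc a₀ b₀)
    (hP : Perfect P) (hne : P.Nonempty) (hPS : P ⊆ S) : ∃ σ : StratA a₀ b₀, WinningA σ S := by
  have hIoo : ¬ (Ioo a₀ b₀ ∩ P).Countable := by
    refine fun hc => hP.not_countable hne ((hc.mono ?_).of_sdiff (toFinite {a₀, b₀}).countable)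
    rintro x ⟨hxP, hx⟩
    exact ⟨Icc_sdiff_both.subset ⟨hS (hPS hxP), hx⟩, hxP⟩
  exact ⟨condensationStrat a₀ b₀ P,
    (limitSetA_condensationStrat_subset hIoo).trans (hP.closed.closure_eq.subset.trans hPS)⟩

/-- Every subset of ℝ has the perfect set property iff player A has
a winning strategy in every Cantor game with an uncountable target set. -/
theorem stmt9 :
    (∀ S : Set ℝ, ¬ S.Countable → ∃ P : Set ℝ, P.Nonempty ∧ PerfectSet P ∧ P ⊆ S) ↔
    (∀ a₀ b₀ : ℝ, a₀ < b₀ → ∀ S : Set ℝ, S ⊆ Set.Icc a₀ b₀ → ¬ S.Countable →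
      ∃ σ : StratA a₀ b₀, WinningA σ S) := by
  constructor
  · intro hpsp a₀ b₀ _ S hS hSc
    obtain ⟨P, hne, hP, hPS⟩ := hpsp S hSc
    exact exists_winningA_of_perfect_subset hS (perfectSet_iff_perfect.1 hP) hne hPS
  · intro hgame S hSc
    obtain ⟨a, b, hab, hS⟩ := exists_Icc_not_countable_inter hSc
    obtain ⟨σ, hσ⟩ := hgame a b hab _ inter_subset_right hS
    obtain ⟨P, hP, hne, hPσ⟩ := σ.exists_perfect_subset_limitSetA hab
    exact ⟨P, hne, perfectSet_iff_perfect.2 hP, fun x hx => (hσ (hPσ hx)).1⟩
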